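/- arXiv:1601.00361 — 2 statements merged into one kernel-verified Lean document; each statement's English description precedes it below -/
import Mathlib

section
/- For every b > 0, R > 1 and ε > 0 there exists α ∈ (0,1] such that sinh(bα)/sinh(b) < sup_{s ≥ 0} 𝒜(s) and ∫_1^R 𝒜⁻¹( sinh(bα)/sinh(b s) ) ds < ε. -/
open intervalIntegral Set Real Filter Topology

/-! Choose `s₀ > 0` with `s₀ (R - 1) < ε`; then `A s₀ > 0`, and for `α` small the quotient
`sinh (b α) / sinh (b s) ≤ sinh (b α) / sinh b` stays below `A s₀` for all `s ≥ 1`. On `[0, A s₀)`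
the right inverse `Ainv` of the strictly increasing `A` is increasing with values in `[0, s₀)`, so
the integrand is antitone (hence integrable) and bounded by `s₀`, and the integral is at most
`s₀ (R - 1) < ε`. -/

theorem StrictMonoOn.monotoneOn_of_rightInvOn {α β : Type*} [LinearOrder α] [Preorder β]
    {f : α → β} {g : β → α} {s : Set α} {t : Set β} (hf : StrictMonoOn f s)
    (hg : MapsTo g t s) (hfg : RightInvOn g f t) : MonotoneOn g t := by
  intro x hx y hy hxy
  by_contra! hlt
  have := hf (hg hy) (hg hx) hlt
  rw [hfg hx, hfg hy] at this
  exact this.not_ge hxy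

theorem antitoneOn_sinh_div_sinh_mul {b c : ℝ} (hb : 0 < b) (hc : 0 ≤ c) :
    AntitoneOn (fun s => sinh c / sinh (b * s)) (Ioi 0) := by
  intro x hx y _ hxy
  exact div_le_div_of_nonneg_left (sinh_nonneg_iff.mpr hc) (sinh_pos_iff.mpr (mul_pos hb hx))
    (sinh_le_sinh.mpr (mul_le_mul_of_nonneg_left hxy hb.le))

theorem exists_mem_Ioc_sinh_mul_div_sinh_lt (b : ℝ) {M : ℝ} (hM : 0 < M) :
    ∃ α ∈ Ioc (0 : ℝ) 1, sinh (b * α) / sinh b < M := by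
  have hlim : Tendsto (fun α => sinh (b * α) / sinh b) (𝓝[>] 0) (𝓝 0) := by
    have : Continuous fun α => sinh (b * α) / sinh b := by fun_prop
    simpa using (this.tendsto 0).mono_left nhdsWithin_le_nhds
  obtain ⟨α, hαM, hα⟩ := ((hlim.eventually (gt_mem_nhds hM)).and
    (Ioc_mem_nhdsGT one_pos)).exists
  exact ⟨α, hα, hαM⟩

theorem stmt_9_general (A Ainv : ℝ → ℝ)
    (hA : ContDiffOn ℝ 1 A (Set.Ici 0))
    (hA0 : A 0 = 0)
    (hA' : ∀ s : ℝ, 0 < s → 0 < deriv A s)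
    (hAinvR : ∀ t : ℝ, 0 ≤ t → (∃ s, 0 ≤ s ∧ t < A s) → 0 ≤ Ainv t ∧ A (Ainv t) = t)
    (b R ε : ℝ) (hb : 0 < b) (hR : 1 < R) (hε : 0 < ε) :
    ∃ α ∈ Set.Ioc (0:ℝ) 1,
      (∃ s, 0 ≤ s ∧ Real.sinh (b * α) / Real.sinh b < A s) ∧
      (∫ s in (1:ℝ)..R, Ainv (Real.sinh (b * α) / Real.sinh (b * s))) < ε := by
  have hAmono : StrictMonoOn A (Ici 0) :=
    strictMonoOn_of_deriv_pos (convex_Ici 0) hA.continuousOn (by simpa using hA')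
  have hR1 : 0 < R - 1 := sub_pos.2 hR
  obtain ⟨s₀, hs₀, hs₀ε⟩ : ∃ s₀ > 0, s₀ * (R - 1) < ε :=
    ⟨ε / (2 * (R - 1)), by positivity, by field_simp; linarith⟩
  have hAs₀ : 0 < A s₀ := hA0 ▸ hAmono self_mem_Ici hs₀.le hs₀
  obtain ⟨α, hα, hαA⟩ := exists_mem_Ioc_sinh_mul_div_sinh_lt b hAs₀
  refine ⟨α, hα, ⟨s₀, hs₀.le, hαA⟩, ?_⟩
  have hAinv : ∀ t ∈ Ico 0 (A s₀), 0 ≤ Ainv t ∧ A (Ainv t) = t :=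
    fun t ht => hAinvR t ht.1 ⟨s₀, hs₀.le, ht.2⟩
  have hAinv_mono : MonotoneOn Ainv (Ico 0 (A s₀)) :=
    hAmono.monotoneOn_of_rightInvOn (fun t ht => (hAinv t ht).1) (fun t ht => (hAinv t ht).2)
  have hAinv_lt : ∀ t ∈ Ico 0 (A s₀), Ainv t < s₀ := fun t ht =>
    (hAmono.lt_iff_lt (hAinv t ht).1 hs₀.le).1 ((hAinv t ht).2.symm ▸ ht.2)
  have hquot_anti := antitoneOn_sinh_div_sinh_mul hb (mul_pos hb hα.1).le
  have hquot_mem : ∀ s ∈ Icc 1 R, sinh (b * α) / sinh (b * s) ∈ Ico 0 (A s₀) := fun s hs =>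
    ⟨div_nonneg (sinh_nonneg_iff.mpr (mul_pos hb hα.1).le)
      (sinh_nonneg_iff.mpr (mul_pos hb (one_pos.trans_le hs.1)).le),
    (hquot_anti (mem_Ioi.2 one_pos) (one_pos.trans_le hs.1) hs.1).trans_lt (by simpa using hαA)⟩
  have hint_anti : AntitoneOn (fun s => Ainv (sinh (b * α) / sinh (b * s))) (uIcc 1 R) := by
    rw [uIcc_of_le hR.le]
    exact fun x hx y hy hxy => hAinv_mono (hquot_mem y hy) (hquot_mem x hx)
      (hquot_anti (one_pos.trans_le hx.1) (one_pos.trans_le hy.1) hxy)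
  calc (∫ s in (1:ℝ)..R, Ainv (sinh (b * α) / sinh (b * s)))
      ≤ ∫ _ in (1:ℝ)..R, s₀ :=
        integral_mono_on hR.le hint_anti.intervalIntegrable intervalIntegrable_const
          fun s hs => (hAinv_lt _ (hquot_mem s hs)).le
    _ = s₀ * (R - 1) := by simp [mul_comm]
    _ < ε := hs₀ε

/-- For every `b > 0`, `R > 1` and `ε > 0` there exists `α ∈ (0,1]` such that
`sinh(bα)/sinh(b) < sup_{s ≥ 0} 𝒜(s)` (encoded as `∃ s ≥ 0, sinh(bα)/sinh(b) < 𝒜(s)`) and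
`∫_1^R 𝒜⁻¹( sinh(bα)/sinh(b s) ) ds < ε`. -/
theorem stmt_9 (A Ainv : ℝ → ℝ)
    (hA : ContDiffOn ℝ 1 A (Set.Ici 0))
    (hA0 : A 0 = 0)
    (hA' : ∀ s : ℝ, 0 < s → 0 < deriv A s)
    (hAinvL : ∀ s : ℝ, 0 ≤ s → Ainv (A s) = s)
    (hAinvR : ∀ t : ℝ, 0 ≤ t → (∃ s, 0 ≤ s ∧ t < A s) → 0 ≤ Ainv t ∧ A (Ainv t) = t)
    (b R ε : ℝ) (hb : 0 < b) (hR : 1 < R) (hε : 0 < ε) :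
    ∃ α ∈ Set.Ioc (0:ℝ) 1,
      (∃ s, 0 ≤ s ∧ Real.sinh (b * α) / Real.sinh b < A s) ∧
      (∫ s in (1:ℝ)..R, Ainv (Real.sinh (b * α) / Real.sinh (b * s))) < ε :=
  stmt_9_general A Ainv hA hA0 hA' hAinvR b R ε hb hR hε
end

section
/- Let n ≥ 2 be an integer and a > 0; assume moreover that 𝒜 is bounded and set K₀ := sup_{s ≥ 0} 𝒜(s). Then for every d > 0 the Lebesgue integral J(d) = ∫_d^∞ 𝒜⁻¹( K₀·(cosh(a t))^{-(n-1)} ) dt is finite, and J(d) → 0 as d → +∞. -/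
/-!
Since `𝒜' > 0`, `𝒜` is strictly increasing on `[0, ∞)`, so `t ↦ 𝒜⁻¹(K₀ / cosh(a t)^(n-1))` is
nonnegative and antitone on `(0, ∞)`, hence locally integrable there. The growth condition gives
`𝒜⁻¹(y) ≤ (y / D)^(1/q)` for small `y`, and `K₀ / cosh(a t)^(n-1) ≤ 2 K₀ e^(-a t)`, so the
integrand is `O(e^(-a t / q))` at infinity. This gives integrability on every `(d, ∞)`, and tails
of an integrable function have integrals tending to `0`.
-/

open MeasureTheory Set Filter Real Asymptotics

theorem AntitoneOn.integrableOn_Ioi_of_isBigO_exp_neg {f : ℝ → ℝ} {a b : ℝ}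
    (hf : AntitoneOn f (Ici a)) (hb : 0 < b) (ho : f =O[atTop] fun x => exp (-b * x)) :
    IntegrableOn f (Ioi a) :=
  integrableOn_Ici_iff_integrableOn_Ioi (by finiteness) |>.mp <|
    ((locallyIntegrableOn_iff isClosed_Ici.isLocallyClosed).2 fun _ hk hc =>
      (hf.mono hk).integrableOn_isCompact hc).integrableOn_of_isBigO_atTop
    ho ⟨Ioi b, Ioi_mem_atTop b, exp_neg_integrableOn_Ioi b hb⟩

theorem antitoneOn_of_strictMonoOn_comp {α β γ : Type*} [Preorder α] [LinearOrder β] [Preorder γ]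
    {f : β → γ} {g : α → β} {s : Set α} {t : Set β} (hf : StrictMonoOn f t) (hg : MapsTo g s t)
    (hfg : AntitoneOn (f ∘ g) s) : AntitoneOn g s := fun _ hx _ hy hxy =>
  (hf.le_iff_le (hg hy) (hg hx)).1 (hfg hx hy hxy)

theorem div_cosh_pow_lt_self {K x : ℝ} (hK : 0 < K) (hx : x ≠ 0) {n : ℕ} (hn : n ≠ 0) :
    K / cosh x ^ n < K :=
  div_lt_self hK (one_lt_pow₀ (one_lt_cosh.2 hx) hn)

theorem div_cosh_pow_le_two_mul_exp_neg {K : ℝ} (hK : 0 ≤ K) (x : ℝ) {n : ℕ} (hn : n ≠ 0) :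
    K / cosh x ^ n ≤ 2 * K * exp (-x) := by
  have hexp : exp x / 2 ≤ cosh x ^ n := by
    calc exp x / 2 ≤ cosh x := by rw [cosh_eq]; linarith [exp_pos (-x)]
      _ ≤ cosh x ^ n := le_self_pow₀ (one_le_cosh x) hn
  calc K / cosh x ^ n ≤ K / (exp x / 2) := by gcongr
    _ = 2 * K * exp (-x) := by rw [exp_neg]; field_simp

theorem antitoneOn_div_cosh_mul_pow {K a : ℝ} (hK : 0 ≤ K) (ha : 0 ≤ a) (n : ℕ) :
    AntitoneOn (fun t => K / cosh (a * t) ^ n) (Ici 0) := by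
  intro s hs t ht hst
  have hcosh : cosh (a * s) ≤ cosh (a * t) := by
    rw [cosh_le_cosh, abs_of_nonneg (mul_nonneg ha hs), abs_of_nonneg (mul_nonneg ha ht)]
    exact mul_le_mul_of_nonneg_left hst ha
  dsimp only
  gcongr

section Growth

variable {A : ℝ → ℝ} {q δ₀ D : ℝ}

theorem le_rpow_inv_of_growth (hmono : StrictMonoOn A (Ici 0)) (hq : 0 < q) (hδ₀ : 0 ≤ δ₀)
    (hD : 0 < D) (hgrowth : ∀ s ∈ Icc 0 δ₀, D * s ^ q ≤ A s) {s y : ℝ} (hs : 0 ≤ s)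
    (hsy : A s ≤ y) (hy : y ≤ A δ₀) : s ≤ (y / D) ^ q⁻¹ := by
  have hsδ : s ≤ δ₀ := (hmono.le_iff_le hs hδ₀).1 (hsy.trans hy)
  have hpow : s ^ q ≤ y / D := (le_div_iff₀' hD).2 ((hgrowth s ⟨hs, hsδ⟩).trans hsy)
  calc s = (s ^ q) ^ q⁻¹ := (rpow_rpow_inv hs hq.ne').symm
    _ ≤ (y / D) ^ q⁻¹ := rpow_le_rpow (rpow_nonneg hs q) hpow (inv_nonneg.2 hq.le)

theorem isBigO_exp_neg_of_growth (hmono : StrictMonoOn A (Ici 0)) (hq : 0 < q) (hδ₀ : 0 < δ₀)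
    (hD : 0 < D) (hgrowth : ∀ s ∈ Icc 0 δ₀, D * s ^ q ≤ A s) {g : ℝ → ℝ} {B a : ℝ}
    (hB : 0 ≤ B) (ha : 0 < a) (hg : ∀ᶠ t in atTop, 0 ≤ g t ∧ A (g t) ≤ B * exp (-(a * t))) :
    g =O[atTop] fun t => exp (-(a / q) * t) := by
  have hAδ₀ : 0 < A δ₀ :=
    (mul_pos hD (rpow_pos_of_pos hδ₀ q)).trans_le (hgrowth δ₀ ⟨hδ₀.le, le_rfl⟩)
  have hsmall : ∀ᶠ t in atTop, B * exp (-(a * t)) ≤ A δ₀ := by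
    have : Tendsto (fun t => B * exp (-(a * t))) atTop (nhds 0) := by
      simpa using (tendsto_exp_neg_atTop_nhds_zero.comp
        (tendsto_id.const_mul_atTop ha)).const_mul B
    exact this.eventually_le_const hAδ₀
  refine IsBigO.of_bound ((B / D) ^ q⁻¹) ?_
  filter_upwards [hg, hsmall] with t ⟨hgt, hAgt⟩ ht
  rw [norm_of_nonneg hgt, norm_of_nonneg (exp_pos _).le]
  calc g t ≤ (B * exp (-(a * t)) / D) ^ q⁻¹ :=
        le_rpow_inv_of_growth hmono hq hδ₀.le hD hgrowth hgt hAgt ht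
    _ = (B / D) ^ q⁻¹ * exp (-(a / q) * t) := by
        rw [mul_div_right_comm, mul_rpow (by positivity) (exp_pos _).le, ← exp_mul]
        congr 2
        field_simp

end Growth

theorem stmt_12_general (A Ainv : ℝ → ℝ)
    (hA : ContDiffOn ℝ 1 A (Set.Ici 0))
    (hA' : ∀ s : ℝ, 0 < s → 0 < deriv A s)
    (q δ₀ D : ℝ) (hq : 0 < q) (hδ₀ : 0 < δ₀) (hD : 0 < D)
    (hgrowth : ∀ s ∈ Set.Icc (0:ℝ) δ₀, D * s ^ q ≤ A s)
    (hbdd : BddAbove (A '' Set.Ici 0))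
    (K₀ : ℝ) (hK₀ : K₀ = sSup (A '' Set.Ici 0))
    (hAinvR : ∀ t : ℝ, 0 ≤ t → t < K₀ → 0 ≤ Ainv t ∧ A (Ainv t) = t)
    (n : ℕ) (hn : 2 ≤ n) (a : ℝ) (ha : 0 < a) :
    (∀ d : ℝ, 0 < d →
      MeasureTheory.IntegrableOn (fun t => Ainv (K₀ / Real.cosh (a * t) ^ (n - 1)))
        (Set.Ioi d)) ∧
    Filter.Tendsto (fun d => ∫ t in Set.Ioi d, Ainv (K₀ / Real.cosh (a * t) ^ (n - 1)))
      Filter.atTop (nhds 0) := by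
  have hmono : StrictMonoOn A (Ici 0) :=
    strictMonoOn_of_deriv_pos (convex_Ici 0) hA.continuousOn fun x hx =>
      hA' x (by rwa [interior_Ici] at hx)
  have hK₀pos : 0 < K₀ := hK₀ ▸
    (mul_pos hD (rpow_pos_of_pos hδ₀ q)).trans_le
      ((hgrowth δ₀ ⟨hδ₀.le, le_rfl⟩).trans (le_csSup hbdd ⟨δ₀, hδ₀.le, rfl⟩))
  have hn1 : n - 1 ≠ 0 := by omega
  have hAinv : ∀ t, 0 < t → 0 ≤ Ainv (K₀ / cosh (a * t) ^ (n - 1)) ∧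
      A (Ainv (K₀ / cosh (a * t) ^ (n - 1))) = K₀ / cosh (a * t) ^ (n - 1) := fun t ht =>
    hAinvR _ (by positivity) (div_cosh_pow_lt_self hK₀pos (mul_pos ha ht).ne' hn1)
  have hanti : ∀ d, 0 < d →
      AntitoneOn (fun t => Ainv (K₀ / cosh (a * t) ^ (n - 1))) (Ici d) := fun d hd =>
    antitoneOn_of_strictMonoOn_comp hmono (fun t ht => (hAinv t (hd.trans_le ht)).1) <|
      ((antitoneOn_div_cosh_mul_pow hK₀pos.le ha.le _).mono (Ici_subset_Ici.2 hd.le)).congr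
        fun t ht => ((hAinv t (hd.trans_le ht)).2).symm
  have hdecay : (fun t => Ainv (K₀ / cosh (a * t) ^ (n - 1))) =O[atTop]
      fun t => exp (-(a / q) * t) := by
    refine isBigO_exp_neg_of_growth hmono hq hδ₀ hD hgrowth (by positivity : 0 ≤ 2 * K₀) ha ?_
    filter_upwards [eventually_gt_atTop 0] with t ht
    exact ⟨(hAinv t ht).1,
      (hAinv t ht).2.trans_le (div_cosh_pow_le_two_mul_exp_neg hK₀pos.le _ hn1)⟩
  exact ⟨fun d hd => (hanti d hd).integrableOn_Ioi_of_isBigO_exp_neg (by positivity) hdecay,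
    tendsto_integral_Ioi_zero tendsto_id⟩

/-- Let `n ≥ 2`, `a > 0`; assume 𝒜 is bounded and set
`K₀ := sup_{s ≥ 0} 𝒜(s)`. Then for every `d > 0` the Lebesgue integral
`J(d) = ∫_d^∞ 𝒜⁻¹( K₀·(cosh(a t))^{-(n-1)} ) dt` is finite, and `J(d) → 0` as `d → +∞`. -/
theorem stmt_12 (A Ainv : ℝ → ℝ)
    (hA : ContDiffOn ℝ 1 A (Set.Ici 0))
    (hA0 : A 0 = 0)
    (hA' : ∀ s : ℝ, 0 < s → 0 < deriv A s)
    (q δ₀ D : ℝ) (hq : 0 < q) (hδ₀ : 0 < δ₀) (hD : 0 < D)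
    (hgrowth : ∀ s ∈ Set.Icc (0:ℝ) δ₀, D * s ^ q ≤ A s)
    (hbdd : BddAbove (A '' Set.Ici 0))
    (K₀ : ℝ) (hK₀ : K₀ = sSup (A '' Set.Ici 0))
    (hAinvL : ∀ s : ℝ, 0 ≤ s → Ainv (A s) = s)
    (hAinvR : ∀ t : ℝ, 0 ≤ t → t < K₀ → 0 ≤ Ainv t ∧ A (Ainv t) = t)
    (n : ℕ) (hn : 2 ≤ n) (a : ℝ) (ha : 0 < a) :
    (∀ d : ℝ, 0 < d →
      MeasureTheory.IntegrableOn (fun t => Ainv (K₀ / Real.cosh (a * t) ^ (n - 1)))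
        (Set.Ioi d)) ∧
    Filter.Tendsto (fun d => ∫ t in Set.Ioi d, Ainv (K₀ / Real.cosh (a * t) ^ (n - 1)))
      Filter.atTop (nhds 0) :=
  stmt_12_general A Ainv hA hA' q δ₀ D hq hδ₀ hD hgrowth hbdd K₀ hK₀ hAinvR n hn a ha
end
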